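/- For every integer n ≥ 3 and every real m with 0 < m < (n-2)^{(n-2)/2} / n^{n/2}, there exist real numbers r₋, r₊ with 0 < r₋ < ((n-2)/n)^{1/2} < r₊ < 1 such that the function V(r) = 1 - r² - 2m r^{-(n-2)} satisfies V(r₋) = V(r₊) = 0 and V(r) > 0 for all r in (r₋, r₊). -/

import Mathlib

/-!
Multiplying by `r^(n-2)`, the zeros of `V` are the solutions of `r^k (1 - r²) = 2m` with
`k = n - 2`. The left side vanishes at `0` and `1`, increases strictly up to `r_* = √(k/(k+2))`
and decreases strictly afterwards; its maximum `2 r_*^k / (k+2)` exceeds `2m` exactly under the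
hypothesis on `m`. The intermediate value theorem on each side of `r_*` gives `r₋` and `r₊`,
and unimodality gives `V > 0` between them.
-/

open Real Set

theorem exists_eq_eq_and_lt_of_strictMonoOn_of_strictAntiOn {f : ℝ → ℝ} {a c b y : ℝ}
    (hac : a ≤ c) (hcb : c ≤ b) (hf : ContinuousOn f (Icc a b))
    (hmono : StrictMonoOn f (Icc a c)) (hanti : StrictAntiOn f (Icc c b))
    (ha : f a < y) (hc : y < f c) (hb : f b < y) :
    ∃ x₁ ∈ Ioo a c, ∃ x₂ ∈ Ioo c b, f x₁ = y ∧ f x₂ = y ∧ ∀ x ∈ Ioo x₁ x₂, y < f x := by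
  obtain ⟨x₁, hx₁, hfx₁⟩ :=
    intermediate_value_Ioo hac (hf.mono (Icc_subset_Icc_right hcb)) ⟨ha, hc⟩
  obtain ⟨x₂, hx₂, hfx₂⟩ :=
    intermediate_value_Ioo' hcb (hf.mono (Icc_subset_Icc_left hac)) ⟨hb, hc⟩
  refine ⟨x₁, hx₁, x₂, hx₂, hfx₁, hfx₂, fun x hx => ?_⟩
  rcases le_total x c with hxc | hcx
  · rw [← hfx₁]
    exact hmono (Ioo_subset_Icc_self hx₁) ⟨hx₁.1.le.trans hx.1.le, hxc⟩ hx.1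
  · rw [← hfx₂]
    exact hanti ⟨hcx, hx.2.le.trans hx₂.2.le⟩ (Ioo_subset_Icc_self hx₂) hx.2

def horizonMass (k : ℕ) (r : ℝ) : ℝ := r ^ k * (1 - r ^ 2)

noncomputable def criticalRadius (k : ℕ) : ℝ := √((k : ℝ) / (k + 2))

section

variable {k : ℕ}

theorem hasDerivAt_horizonMass (hk : 0 < k) (r : ℝ) :
    HasDerivAt (horizonMass k) (r ^ (k - 1) * (k - (k + 2) * r ^ 2)) r := by
  refine ((hasDerivAt_pow k r).mul ((hasDerivAt_pow 2 r).const_sub 1)).congr_deriv ?_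
  obtain ⟨j, rfl⟩ : ∃ j, k = j + 1 := ⟨k - 1, by omega⟩
  simp only [Nat.add_sub_cancel, Nat.cast_add, Nat.cast_one]
  ring

theorem continuous_horizonMass (k : ℕ) : Continuous (horizonMass k) := by
  unfold horizonMass
  fun_prop

theorem horizonMass_zero (hk : 0 < k) : horizonMass k 0 = 0 := by
  simp [horizonMass, hk.ne']

theorem horizonMass_one (k : ℕ) : horizonMass k 1 = 0 := by
  simp [horizonMass]

theorem sq_criticalRadius (k : ℕ) : criticalRadius k ^ 2 = k / (k + 2) :=
  sq_sqrt (by positivity)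

theorem criticalRadius_pos (hk : 0 < k) : 0 < criticalRadius k :=
  sqrt_pos.2 (by positivity)

theorem criticalRadius_lt_one (k : ℕ) : criticalRadius k < 1 := by
  rw [criticalRadius, sqrt_lt' one_pos, one_pow, div_lt_one (by positivity)]
  linarith

theorem horizonMass_criticalRadius (k : ℕ) :
    horizonMass k (criticalRadius k) = 2 * (criticalRadius k ^ k / (k + 2)) := by
  rw [horizonMass, sq_criticalRadius]
  field_simp
  ring

theorem strictMonoOn_horizonMass (hk : 0 < k) :
    StrictMonoOn (horizonMass k) (Icc 0 (criticalRadius k)) := by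
  refine strictMonoOn_of_deriv_pos (convex_Icc _ _) (continuous_horizonMass k).continuousOn
    fun r hr => ?_
  rw [interior_Icc] at hr
  rw [(hasDerivAt_horizonMass hk r).deriv]
  have hr2 : r ^ 2 < k / (k + 2) :=
    sq_criticalRadius k ▸ pow_lt_pow_left₀ hr.2 hr.1.le two_ne_zero
  rw [lt_div_iff₀ (by positivity)] at hr2
  exact mul_pos (pow_pos hr.1 _) (by linarith)

theorem strictAntiOn_horizonMass (hk : 0 < k) :
    StrictAntiOn (horizonMass k) (Ici (criticalRadius k)) := by
  refine strictAntiOn_of_deriv_neg (convex_Ici _) (continuous_horizonMass k).continuousOn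
    fun r hr => ?_
  rw [interior_Ici] at hr
  rw [(hasDerivAt_horizonMass hk r).deriv]
  have hs := criticalRadius_pos hk
  have hr2 : k / (k + 2) < r ^ 2 :=
    sq_criticalRadius k ▸ pow_lt_pow_left₀ hr hs.le two_ne_zero
  rw [div_lt_iff₀ (by positivity)] at hr2
  exact mul_neg_of_pos_of_neg (pow_pos (hs.trans hr) _) (by linarith)

theorem exists_horizonMass_eq (hk : 0 < k) {m : ℝ} (hm0 : 0 < m)
    (hm : 2 * m < horizonMass k (criticalRadius k)) :
    ∃ rm ∈ Ioo 0 (criticalRadius k), ∃ rp ∈ Ioo (criticalRadius k) 1,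
      horizonMass k rm = 2 * m ∧ horizonMass k rp = 2 * m ∧
      ∀ r ∈ Ioo rm rp, 2 * m < horizonMass k r :=
  exists_eq_eq_and_lt_of_strictMonoOn_of_strictAntiOn (criticalRadius_pos hk).le
    (criticalRadius_lt_one k).le (continuous_horizonMass k).continuousOn
    (strictMonoOn_horizonMass hk) ((strictAntiOn_horizonMass hk).mono Icc_subset_Ici_self)
    (by rw [horizonMass_zero hk]; linarith) hm (by rw [horizonMass_one]; linarith)

end

theorem one_sub_sq_sub_div_pow_eq {r : ℝ} (hr : r ≠ 0) (k : ℕ) (m : ℝ) :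
    1 - r ^ 2 - 2 * m / r ^ k = (horizonMass k r - 2 * m) / r ^ k := by
  rw [horizonMass]
  field_simp

theorem sqrt_div_pow_div_eq_rpow {a b : ℝ} (ha : 0 ≤ a) (hb : 0 < b) (k : ℕ) :
    √(a / b) ^ k / b = a ^ ((k : ℝ) / 2) / b ^ (((k : ℝ) + 2) / 2) := by
  rw [sqrt_eq_rpow, ← rpow_natCast, ← rpow_mul (div_nonneg ha hb.le), div_rpow ha hb.le,
    add_div, div_self two_ne_zero, rpow_add_one hb.ne', one_div_mul_eq_div, div_div]

/-- Existence of the horizon radii `r₋ < r_* < r₊` for the de Sitter–Schwarzschild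
potential `V(r) = 1 - r² - 2m/r^(n-2)` when `0 < m < (n-2)^((n-2)/2)/n^(n/2)`. -/
theorem stmt_0 (n : ℕ) (hn : 3 ≤ n) (m : ℝ)
    (hm0 : 0 < m)
    (hm1 : m < ((n : ℝ) - 2) ^ (((n : ℝ) - 2) / 2) / (n : ℝ) ^ ((n : ℝ) / 2)) :
    ∃ rm rp : ℝ, 0 < rm ∧ rm < Real.sqrt (((n : ℝ) - 2) / n) ∧
      Real.sqrt (((n : ℝ) - 2) / n) < rp ∧ rp < 1 ∧
      (1 - rm ^ 2 - 2 * m / rm ^ (n - 2) = 0) ∧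
      (1 - rp ^ 2 - 2 * m / rp ^ (n - 2) = 0) ∧
      ∀ r ∈ Set.Ioo rm rp, 0 < 1 - r ^ 2 - 2 * m / r ^ (n - 2) := by
  obtain ⟨k, rfl⟩ : ∃ k, n = k + 2 := ⟨n - 2, by omega⟩
  have hk : 0 < k := by omega
  simp only [Nat.cast_add, Nat.cast_ofNat, add_sub_cancel_right, Nat.add_sub_cancel] at hm1 ⊢
  rw [← sqrt_div_pow_div_eq_rpow k.cast_nonneg (by positivity)] at hm1
  obtain ⟨rm, ⟨hrm0, hrm⟩, rp, ⟨hrp, hrp1⟩, hrm_eq, hrp_eq, hlt⟩ :=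
    exists_horizonMass_eq hk hm0 (by rw [horizonMass_criticalRadius, criticalRadius]; linarith)
  refine ⟨rm, rp, hrm0, hrm, hrp, hrp1, ?_, ?_, fun r hr => ?_⟩
  · rw [one_sub_sq_sub_div_pow_eq hrm0.ne', hrm_eq, sub_self, zero_div]
  · rw [one_sub_sq_sub_div_pow_eq (hrm0.trans (hrm.trans hrp)).ne', hrp_eq, sub_self, zero_div]
  · have hr0 := hrm0.trans hr.1
    rw [one_sub_sq_sub_div_pow_eq hr0.ne']
    exact div_pos (sub_pos.2 (hlt r hr)) (pow_pos hr0 _)
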